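/- Let p_E ∈ (0,1], u > 1, and let ξ : (0,1) → ℝ≥0 be bounded. Setting η(p) = (ln u + ξ(p))/(p_E·p), we have (1 - p_E·p)^{η(p)} = e^{-ξ(p)}/u + O(p) as p → 0. -/

import Mathlib

/-!
Write `x = p_E p` and `a = ln u + ξ(p) ≥ 0`, so that the claim compares `exp ((a / x) ln (1 - x))`
with `exp (-a) = e^{-ξ(p)} / u`. Since `ln (1 - x) = -x + O(x²)`, the two exponents differ by
`(a / x) · O(x²) = O(a x)`, and both are nonpositive, where `exp` is `1`-Lipschitz.
-/

open Real

lemma Real.abs_log_one_sub_add_le {x : ℝ} (hx : |x| ≤ 1 / 2) : |log (1 - x) + x| ≤ 2 * x ^ 2 := by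
  have h := abs_log_sub_add_sum_range_le (x := x) (by linarith) 1
  simp only [Finset.sum_range_one, zero_add, pow_one, Nat.cast_zero, div_one, Nat.reduceAdd,
    sq_abs] at h
  calc |log (1 - x) + x| = |x + log (1 - x)| := by rw [add_comm]
    _ ≤ x ^ 2 / (1 - |x|) := h
    _ ≤ 2 * x ^ 2 := by rw [div_le_iff₀ (by linarith)]; nlinarith [sq_nonneg x]

lemma Real.abs_exp_sub_exp_le_of_nonpos {y z : ℝ} (hy : y ≤ 0) (hz : z ≤ 0) :
    |exp y - exp z| ≤ |y - z| := by
  wlog hyz : y ≤ z generalizing y z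
  · rw [abs_sub_comm, abs_sub_comm y]
    exact this hz hy (le_of_not_ge hyz)
  have hexp : exp z - exp y = exp z * (1 - exp (y - z)) := by
    rw [exp_sub, mul_sub, mul_div_cancel₀ _ (exp_pos z).ne', mul_one]
  rw [abs_sub_comm, abs_sub_comm y, abs_of_nonneg (sub_nonneg.2 (exp_le_exp.2 hyz)),
    abs_of_nonneg (sub_nonneg.2 hyz), hexp]
  calc exp z * (1 - exp (y - z)) ≤ 1 * (z - y) :=
        mul_le_mul (exp_le_one_iff.2 hz) (by linarith [add_one_le_exp (y - z)])
          (sub_nonneg.2 (exp_le_one_iff.2 (by linarith))) zero_le_one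
    _ = z - y := one_mul _

lemma Real.abs_exp_div_mul_log_one_sub_sub_exp_neg_le {a x : ℝ} (ha : 0 ≤ a) (hx0 : 0 < x)
    (hx : x ≤ 1 / 2) : |exp (a / x * log (1 - x)) - exp (-a)| ≤ 2 * a * x := by
  have hlog : log (1 - x) ≤ 0 := log_nonpos (by linarith) (by linarith)
  have hexponent : a / x * log (1 - x) - -a = a / x * (log (1 - x) + x) := by
    field_simp
    ring
  calc |exp (a / x * log (1 - x)) - exp (-a)| ≤ |a / x * log (1 - x) - -a| :=
        abs_exp_sub_exp_le_of_nonpos (mul_nonpos_of_nonneg_of_nonpos (by positivity) hlog)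
          (by linarith)
    _ = a / x * |log (1 - x) + x| := by rw [hexponent, abs_mul, abs_of_nonneg (by positivity)]
    _ ≤ a / x * (2 * x ^ 2) := by
        gcongr
        exact abs_log_one_sub_add_le (by rw [abs_of_pos hx0]; exact hx)
    _ = 2 * a * x := by field_simp

theorem fact4_general (pE u : ℝ) (hpE0 : 0 < pE) (hu : 1 < u)
    (ξ : ℝ → ℝ)
    (hξ0 : ∀ p ∈ Set.Ioo (0:ℝ) 1, 0 ≤ ξ p)
    (hξb : ∃ M : ℝ, ∀ p ∈ Set.Ioo (0:ℝ) 1, ξ p ≤ M) :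
    ∃ C p₀ : ℝ, 0 < C ∧ 0 < p₀ ∧ ∀ p : ℝ, 0 < p → p < p₀ →
      |Real.exp (((Real.log u + ξ p) / (pE * p)) * Real.log (1 - pE * p)) -
        Real.exp (-(ξ p)) / u| ≤ C * p := by
  obtain ⟨M, hM⟩ := hξb
  have hhalf : (1 / 2 : ℝ) ∈ Set.Ioo 0 1 := by norm_num
  have hlogu : 0 < log u := log_pos hu
  have hA : 0 < log u + M := by linarith [hξ0 _ hhalf, hM _ hhalf]
  refine ⟨2 * (log u + M) * pE, 1 / (2 * (1 + pE)), by positivity, by positivity,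
    fun p hp hpp₀ ↦ ?_⟩
  rw [lt_div_iff₀' (by positivity)] at hpp₀
  have hp1 : p ∈ Set.Ioo 0 1 := ⟨hp, by nlinarith⟩
  have hrhs : exp (-ξ p) / u = exp (-(log u + ξ p)) := by
    rw [neg_add, exp_add, exp_neg (log u), exp_log (by linarith)]
    ring
  rw [hrhs]
  calc _ ≤ 2 * (log u + ξ p) * (pE * p) :=
        abs_exp_div_mul_log_one_sub_sub_exp_neg_le (by linarith [hξ0 p hp1]) (by positivity)
          (by nlinarith)
    _ ≤ 2 * (log u + M) * (pE * p) := by gcongr; exact hM p hp1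
    _ = 2 * (log u + M) * pE * p := by ring

/-- Fact 4: for η(p) = (ln u + ξ(p))/(p_E p), (1 - p_E p)^η(p) = e^{-ξ(p)}/u + O(p). -/
theorem fact4 (pE u : ℝ) (hpE0 : 0 < pE) (hpE1 : pE ≤ 1) (hu : 1 < u)
    (ξ : ℝ → ℝ)
    (hξ0 : ∀ p ∈ Set.Ioo (0:ℝ) 1, 0 ≤ ξ p)
    (hξb : ∃ M : ℝ, ∀ p ∈ Set.Ioo (0:ℝ) 1, ξ p ≤ M) :
    ∃ C p₀ : ℝ, 0 < C ∧ 0 < p₀ ∧ ∀ p : ℝ, 0 < p → p < p₀ →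
      |Real.exp (((Real.log u + ξ p) / (pE * p)) * Real.log (1 - pE * p)) -
        Real.exp (-(ξ p)) / u| ≤ C * p :=
  fact4_general pE u hpE0 hu ξ hξ0 hξb
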